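/- Consider the discrete update rule: suppose (αₖₗⁿ cᵢₗᵏⁿ − αₖₗⁿ⁻¹ cᵢₗᵏ'ⁿ⁻¹)/Δt = −(fᵢₗᵏⁿ − fᵢ,ₗ₋₁ᵏⁿ)/Δx − gᵢₗᵏⁿ for k = 1,…,N−1 and l = 1,…,N_x, the extracellular compartment satisfies the analogous equation with +Σₖ gᵢₗᵏⁿ, and the fluxes satisfy the no-flux boundary conditions fᵢ₀ᵏⁿ = fᵢ,N_xᵏⁿ = 0. Then the total discrete amount of each ion is conserved: Σₖ₌₁ᴺ Σₗ₌₁^{N_x} αₖₗⁿ cᵢₗᵏⁿ Δx = Σₖ₌₁ᴺ Σₗ₌₁^{N_x} αₖₗⁿ⁻¹ cᵢₗᵏ'ⁿ⁻¹ Δx for each ion species i. -/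
import Mathlib

lemma tele_zero (Nx : ℕ) (F : ℕ → ℝ) (h0 : F 0 = 0) (hN : F Nx = 0) :
    ∑ l : Fin Nx, (F ((l : ℕ) + 1) - F (l : ℕ)) = 0 := by
  rw [Fin.sum_univ_eq_sum_range (fun l => F (l + 1) - F l), Finset.sum_range_sub, h0, hN,
    sub_zero]

/-- Discrete conservation of ions for the finite-volume backward-Euler scheme:
compartments `k = 0,…,n-1` are intracellular and `k = n` (`Fin.last n`) is extracellular.
Grid cells are indexed by `l : Fin Nx` (cell `l` uses the fluxes `f k l` and `f k (l+1)`),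
and the no-flux boundary conditions `f k 0 = f k Nx = 0` hold. Then the total discrete
amount of the ion is conserved. -/
theorem discrete_ion_conservation (n Nx : ℕ) (Δt Δx : ℝ)
    (hΔt : 0 < Δt) (hΔx : 0 < Δx)
    (α c α' c' : Fin (n + 1) → Fin Nx → ℝ)
    (f : Fin (n + 1) → ℕ → ℝ) (g : Fin n → Fin Nx → ℝ)
    (hint : ∀ (k : Fin n) (l : Fin Nx),
      (α k.castSucc l * c k.castSucc l - α' k.castSucc l * c' k.castSucc l) / Δt
        = -(f k.castSucc ((l : ℕ) + 1) - f k.castSucc (l : ℕ)) / Δx - g k l)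
    (hext : ∀ l : Fin Nx,
      (α (Fin.last n) l * c (Fin.last n) l - α' (Fin.last n) l * c' (Fin.last n) l) / Δt
        = -(f (Fin.last n) ((l : ℕ) + 1) - f (Fin.last n) (l : ℕ)) / Δx
            + ∑ k : Fin n, g k l)
    (hbc : ∀ k, f k 0 = 0 ∧ f k Nx = 0) :
    ∑ k, ∑ l, α k l * c k l * Δx = ∑ k, ∑ l, α' k l * c' k l * Δx := by
  have key : ∀ k : Fin (n + 1),
      ∀ G : Fin Nx → ℝ,
      (∀ l, (α k l * c k l - α' k l * c' k l) / Δt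
          = -(f k ((l : ℕ) + 1) - f k (l : ℕ)) / Δx + G l) →
      ∑ l, (α k l * c k l - α' k l * c' k l) = Δt * ∑ l, G l := by
    intro k G h
    have h' : ∀ l, α k l * c k l - α' k l * c' k l
        = Δt * (-(f k ((l : ℕ) + 1) - f k (l : ℕ)) / Δx + G l) := by
      intro l
      have hl := h l
      rw [div_eq_iff (ne_of_gt hΔt)] at hl
      rw [hl]; ring
    calc ∑ l, (α k l * c k l - α' k l * c' k l)
        = ∑ l : Fin Nx, Δt * (-(f k ((l : ℕ) + 1) - f k (l : ℕ)) / Δx + G l) := by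
          exact Finset.sum_congr rfl fun l _ => h' l
      _ = Δt * ((-∑ l : Fin Nx, (f k ((l : ℕ) + 1) - f k (l : ℕ))) / Δx + ∑ l, G l) := by
          rw [← Finset.mul_sum]
          congr 1
          rw [Finset.sum_add_distrib]
          congr 1
          rw [← Finset.sum_neg_distrib, Finset.sum_div]
      _ = Δt * ∑ l, G l := by
          rw [tele_zero Nx (f k) (hbc k).1 (hbc k).2]
          simp
  have main : ∑ k, ∑ l, (α k l * c k l - α' k l * c' k l) = 0 := by
    rw [Fin.sum_univ_castSucc]
    have hlast := key (Fin.last n) (fun l => ∑ k : Fin n, g k l) hext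
    have hin : ∀ k : Fin n,
        ∑ l, (α k.castSucc l * c k.castSucc l - α' k.castSucc l * c' k.castSucc l)
          = Δt * ∑ l, (-g k l) := by
      intro k
      refine key k.castSucc (fun l => -g k l) fun l => ?_
      rw [hint k l]; ring
    rw [hlast, Finset.sum_congr rfl fun k _ => hin k]
    rw [← Finset.mul_sum, ← mul_add]
    rw [Finset.sum_comm]
    simp [Finset.sum_neg_distrib]
  have expand : ∀ (β γ : Fin (n+1) → Fin Nx → ℝ),
      ∑ k, ∑ l, β k l * γ k l * Δx = (∑ k, ∑ l, β k l * γ k l) * Δx := by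
    intro β γ
    simp [Finset.sum_mul]
  rw [expand α c, expand α' c']
  have h2 : (∑ k, ∑ l, α k l * c k l) - (∑ k, ∑ l, α' k l * c' k l) = 0 := by
    rw [← main]; simp [Finset.sum_sub_distrib]
  rw [sub_eq_zero.mp h2]
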